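/- arXiv:2101.08503 — 2 statements merged into one kernel-verified Lean document; each statement's English description precedes it below -/
import Mathlib

section
/- Let d be an even positive integer and let ε : {0,…,d−1} → {−1,1} be a sign pattern with ε(0) = −1 such that there exist two distinct odd indices j₁, j₂ with 1 ≤ j₁, j₂ ≤ d−1 and ε(j₁) = −ε(j₂). Then each of the following three sets is nonempty: the set of monic degree-d polynomials with sign pattern ε having exactly two real roots, both simple, −η < 0 < ξ with ξ > η; the analogous set with ξ < η; and the analogous set with ξ = η (i.e., roots −ξ and ξ). -/
open Polynomial

/-- The monic polynomial `x^d + a_{d-1} x^{d-1} + ⋯ + a_1 x + a_0`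
associated to a coefficient vector `a ∈ ℝ^d`. -/
noncomputable def Qpoly (d : ℕ) (a : Fin d → ℝ) : Polynomial ℝ :=
  X ^ d + ∑ j : Fin d, C (a j) * X ^ (j : ℕ)

/-- `Qpoly d a` has exactly two real roots, both simple, namely `-η < 0 < ξ`. -/
def TwoSimpleRootsPM (d : ℕ) (a : Fin d → ℝ) (ξ η : ℝ) : Prop :=
  0 < ξ ∧ 0 < η ∧
    (Qpoly d a).eval (-η) = 0 ∧ (Qpoly d a).eval ξ = 0 ∧
    (Polynomial.derivative (Qpoly d a)).eval (-η) ≠ 0 ∧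
    (Polynomial.derivative (Qpoly d a)).eval ξ ≠ 0 ∧
    ∀ x : ℝ, (Qpoly d a).eval x = 0 → x = -η ∨ x = ξ

open Finset
set_option maxHeartbeats 1000000

lemma eval_Qpoly (d : ℕ) (a : Fin d → ℝ) (x : ℝ) :
    (Qpoly d a).eval x = x ^ d + ∑ j : Fin d, a j * x ^ (j : ℕ) := by
  simp [Qpoly, eval_finset_sum]

lemma deriv_Qpoly (d : ℕ) (a : Fin d → ℝ) (x : ℝ) :
    ((Qpoly d a).derivative).eval x
      = d * x ^ (d - 1) + ∑ j : Fin d, a j * ((j : ℕ) * x ^ ((j : ℕ) - 1)) := by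
  simp [Qpoly, derivative_X_pow, derivative_sum, mul_assoc, eval_finset_sum]

lemma sum_ite_pow (d : ℕ) (k : Fin d) (c x : ℝ) :
    ∑ j : Fin d, (if j = k then c else 0) * x ^ (j : ℕ) = c * x ^ (k : ℕ) := by
  simp [ite_mul]

lemma sum_pow_bound (d : ℕ) (b : Fin d → ℝ) (T x : ℝ) (hT0 : 0 ≤ T)
    (hT : ∀ j : Fin d, |b j| ≤ T) :
    |∑ j : Fin d, b j * x ^ (j : ℕ)| ≤ d * T * (max 1 |x|) ^ (d - 1) := by
  set M := max 1 |x| with hM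
  have hM1 : (1:ℝ) ≤ M := le_max_left _ _
  have hxM : |x| ≤ M := le_max_right _ _
  calc |∑ j : Fin d, b j * x ^ (j : ℕ)| ≤ ∑ j : Fin d, |b j * x ^ (j : ℕ)| :=
        Finset.abs_sum_le_sum_abs _ _
    _ ≤ ∑ _j : Fin d, T * M ^ (d - 1) := by
        apply Finset.sum_le_sum
        intro j _
        rw [abs_mul, abs_pow]
        have h1 : |x| ^ (j : ℕ) ≤ M ^ (d - 1) := by
          calc |x| ^ (j : ℕ) ≤ M ^ (j : ℕ) := by
                exact pow_le_pow_left₀ (abs_nonneg x) hxM _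
            _ ≤ M ^ (d - 1) := pow_le_pow_right₀ hM1 (by have := j.isLt; omega)
        exact mul_le_mul (hT j) h1 (pow_nonneg (abs_nonneg x) _) hT0
    _ = d * T * M ^ (d - 1) := by
        rw [Finset.sum_const, card_univ, Fintype.card_fin, nsmul_eq_mul]; ring

lemma sum_deriv_bound (d : ℕ) (b : Fin d → ℝ) (T x : ℝ) (hT0 : 0 ≤ T)
    (hT : ∀ j : Fin d, (j : ℕ) ≠ 0 → |b j| ≤ T) :
    |∑ j : Fin d, b j * ((j : ℕ) * x ^ ((j : ℕ) - 1))|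
      ≤ d * (d * T) * (max 1 |x|) ^ (d - 1) := by
  set M := max 1 |x| with hM
  have hM1 : (1:ℝ) ≤ M := le_max_left _ _
  have hxM : |x| ≤ M := le_max_right _ _
  have hM0 : 0 ≤ M := le_trans zero_le_one hM1
  calc |∑ j : Fin d, b j * ((j : ℕ) * x ^ ((j : ℕ) - 1))|
      ≤ ∑ j : Fin d, |b j * ((j : ℕ) * x ^ ((j : ℕ) - 1))| := Finset.abs_sum_le_sum_abs _ _
    _ ≤ ∑ _j : Fin d, d * T * M ^ (d - 1) := by
        apply Finset.sum_le_sum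
        intro j _
        rcases Nat.eq_zero_or_pos (j : ℕ) with h0 | hpos
        · simp [h0]
          positivity
        · rw [abs_mul, abs_mul, abs_pow]
          have hj : ((j:ℕ) : ℝ) ≤ (d : ℝ) := by
            exact_mod_cast le_of_lt j.isLt
          have h1 : |x| ^ ((j : ℕ) - 1) ≤ M ^ (d - 1) := by
            calc |x| ^ ((j:ℕ) - 1) ≤ M ^ ((j:ℕ) - 1) :=
                  pow_le_pow_left₀ (abs_nonneg x) hxM _
              _ ≤ M ^ (d - 1) := pow_le_pow_right₀ hM1 (by have := j.isLt; omega)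
          have habsj : |((j:ℕ) : ℝ)| = ((j:ℕ) : ℝ) := abs_of_nonneg (by positivity)
          rw [habsj]
          calc |b j| * (((j:ℕ):ℝ) * |x| ^ ((j:ℕ) - 1))
              ≤ T * ((d:ℝ) * M ^ (d-1)) := by
                apply mul_le_mul (hT j (by omega)) _ (by positivity) hT0
                exact mul_le_mul hj h1 (by positivity) (by positivity)
            _ = d * T * M ^ (d-1) := by ring
    _ = d * (d * T) * M ^ (d - 1) := by
        rw [Finset.sum_const, card_univ, Fintype.card_fin, nsmul_eq_mul]; ring

lemma aux_roots (d : ℕ) (hd : 0 < d) (hdeven : Even d) (a : Fin d → ℝ)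
    (hT0 : |a ⟨0, hd⟩ + 1| ≤ 1 / (2 * (d:ℝ)^2 * 2^d))
    (hTj : ∀ j : Fin d, (j : ℕ) ≠ 0 → |a j| ≤ 1 / (2 * (d:ℝ)^2 * 2^d))
    (h1 : (Qpoly d a).eval 1 = 0) :
    ∃ η : ℝ, TwoSimpleRootsPM d a 1 η ∧
      (0 < (Qpoly d a).eval (-1) → η < 1) ∧
      ((Qpoly d a).eval (-1) < 0 → 1 < η) ∧
      ((Qpoly d a).eval (-1) = 0 → η = 1) := by
  have hd1 : (1:ℝ) ≤ d := by exact_mod_cast hd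
  set T : ℝ := 1 / (2 * (d:ℝ)^2 * 2^d) with hTdef
  have hTpos : 0 < T := by positivity
  set f : ℝ → ℝ := fun x => (Qpoly d a).eval x with hfdef
  -- global bound on f minus x^d - 1
  have hfb : ∀ x : ℝ, |f x - (x ^ d - 1)| ≤ d * T * (max 1 |x|) ^ (d - 1) := by
    intro x
    have hb : ∀ j : Fin d, |a j + (if j = (⟨0, hd⟩ : Fin d) then 1 else 0)| ≤ T := by
      intro j
      by_cases hj : j = (⟨0, hd⟩ : Fin d)
      · subst hj; simpa using hT0
      · simp only [hj, if_neg, if_false, add_zero]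
        exact hTj j (fun h => hj (Fin.ext h))
    have := sum_pow_bound d (fun j => a j + (if j = (⟨0, hd⟩ : Fin d) then 1 else 0)) T x
      hTpos.le hb
    have hsum : ∑ j : Fin d, (a j + (if j = (⟨0, hd⟩ : Fin d) then 1 else 0)) * x ^ (j:ℕ)
        = (∑ j : Fin d, a j * x ^ (j:ℕ)) + 1 := by
      simp only [add_mul]
      rw [Finset.sum_add_distrib]
      congr 1
      simp [ite_mul]
    rw [hsum] at this
    have : f x - (x ^ d - 1) = (∑ j : Fin d, a j * x ^ (j:ℕ)) + 1 := by
      rw [hfdef]; simp only [eval_Qpoly]; ring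
    rw [this]
    exact ‹|(∑ j : Fin d, a j * x ^ (j:ℕ)) + 1| ≤ _›
  -- derivative bound
  have hf'b : ∀ x : ℝ, |((Qpoly d a).derivative).eval x - d * x ^ (d-1)|
      ≤ d * (d * T) * (max 1 |x|) ^ (d - 1) := by
    intro x
    have := sum_deriv_bound d a T x hTpos.le hTj
    rw [deriv_Qpoly]
    simpa using this
  -- numeric facts
  have h2d : (2:ℝ) ≤ 2 ^ d := by
    calc (2:ℝ) = 2 ^ 1 := (pow_one 2).symm
    _ ≤ 2 ^ d := pow_le_pow_right₀ one_le_two hd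
  have hd2 : 2 ≤ d := by obtain ⟨r, hr⟩ := hdeven; omega
  have h4d : (4:ℝ) ≤ 2 ^ d := by
    calc (4:ℝ) = 2 ^ 2 := by norm_num
    _ ≤ 2 ^ d := pow_le_pow_right₀ one_le_two hd2
  have h2dpos : (0:ℝ) < 2 ^ d := by positivity
  have hdT : (d:ℝ) * T ≤ 1 / 4 := by
    rw [hTdef, mul_one_div, div_le_div_iff₀ (by positivity) (by norm_num)]
    nlinarith [h4d, hd1]
  have hd2T : (d:ℝ) * ((d:ℝ) * T) < (d:ℝ) * (2 / 2 ^ d) := by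
    have hL : (d:ℝ) * ((d:ℝ) * T) = 1 / (2 * 2^d) := by
      rw [hTdef]; field_simp
    rw [hL, ← mul_div_assoc, div_lt_div_iff₀ (by positivity) h2dpos]
    nlinarith [h2dpos, hd1]
  -- negativity on [-1/2, 1/2]
  have hneg : ∀ x : ℝ, |x| ≤ 1/2 → f x < 0 := by
    intro x hx
    have hM : max 1 |x| = 1 := max_eq_left (hx.trans (by norm_num))
    have hb := hfb x
    rw [hM, one_pow, mul_one] at hb
    have hxd : x ^ d ≤ 1/2 := by
      have h1' : x ^ d ≤ |x| ^ d := by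
        rw [← abs_pow]; exact le_abs_self _
      have h2' : |x| ^ d ≤ (1/2:ℝ) ^ d := pow_le_pow_left₀ (abs_nonneg x) hx d
      have h3' : (1/2:ℝ) ^ d ≤ (1/2:ℝ) ^ 1 :=
        pow_le_pow_of_le_one (by norm_num) (by norm_num) hd
      rw [pow_one] at h3'
      linarith
    have := abs_le.1 hb
    linarith
  -- lower bound on x^(d-1) for x ≥ 1/2
  have hlow : ∀ x : ℝ, 1/2 ≤ x → 2 / 2^d * (max 1 |x|) ^ (d-1) ≤ x ^ (d-1) := by
    intro x hx
    have hx0 : 0 ≤ x := le_trans (by norm_num) hx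
    have habs : |x| = x := abs_of_nonneg hx0
    have h2d1 : (2:ℝ) / 2^d = (1/2:ℝ)^(d-1) := by
      have : (2:ℝ)^d = 2^(d-1) * 2 := by
        rw [← pow_succ]; congr 1; omega
      rw [this]
      rw [one_div, inv_pow]
      rw [eq_comm, inv_eq_iff_eq_inv, eq_comm, inv_div]
      field_simp
    rcases le_total x 1 with h|h
    · have hM : max 1 |x| = 1 := max_eq_left (by rw [habs]; exact h)
      rw [hM, one_pow, mul_one, h2d1]
      exact pow_le_pow_left₀ (by norm_num) hx _
    · have hM : max 1 |x| = x := by rw [habs]; exact max_eq_right h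
      rw [hM]
      have : (2:ℝ)/2^d ≤ 1 := by
        rw [div_le_one h2dpos]; exact h2d
      nlinarith [pow_nonneg hx0 (d-1)]
  -- derivative positive for x ≥ 1/2
  have dpos : ∀ x : ℝ, 1/2 ≤ x → 0 < ((Qpoly d a).derivative).eval x := by
    intro x hx
    have hb := hf'b x
    have hl := hlow x hx
    have hMpos : (0:ℝ) < (max 1 |x|) ^ (d-1) := by positivity
    have := abs_le.1 hb
    nlinarith [hd2T, hMpos]
  -- derivative negative for x ≤ -1/2
  have hodd : Odd (d - 1) := Nat.Even.sub_odd hd hdeven odd_one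
  have dneg : ∀ x : ℝ, x ≤ -1/2 → ((Qpoly d a).derivative).eval x < 0 := by
    intro x hx
    have hb := hf'b x
    have hx' : 1/2 ≤ -x := by linarith
    have hl := hlow (-x) hx'
    have habs : |(-x)| = |x| := abs_neg x
    rw [habs] at hl
    have hxpow : x ^ (d-1) = -((-x) ^ (d-1)) := by
      rw [hodd.neg_pow]; ring
    have hMpos : (0:ℝ) < (max 1 |x|) ^ (d-1) := by positivity
    have := abs_le.1 hb
    nlinarith [hd2T, hMpos]
  -- f(-2) > 0
  have f2pos : 0 < f (-2) := by
    have hb := hfb (-2)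
    have hM : max 1 |(-2:ℝ)| = 2 := by norm_num
    rw [hM] at hb
    have hev : ((-2:ℝ)) ^ d = 2 ^ d := by
      rw [show ((-2:ℝ)) = -2 from rfl, hdeven.neg_pow]
    rw [hev] at hb
    have hsmall : (d:ℝ) * T * 2 ^ (d-1) ≤ 1 := by
      rw [hTdef]
      have h2' : (2:ℝ)^d = 2^(d-1) * 2 := by rw [← pow_succ]; congr 1; omega
      rw [h2', mul_one_div, div_mul_eq_mul_div, div_le_one (by positivity)]
      nlinarith [pow_pos (show (0:ℝ) < 2 by norm_num) (d-1), hd1, sq_nonneg ((d:ℝ)-1)]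
    have := abs_le.1 hb
    linarith
  -- continuity
  have cont : Continuous f := by
    rw [hfdef]
    exact Polynomial.continuous _
  -- strict monotonicity
  have hderiv : ∀ x : ℝ, deriv f x = ((Qpoly d a).derivative).eval x := by
    intro x
    rw [hfdef]
    exact Polynomial.deriv _
  have mono : StrictMonoOn f (Set.Ici (1/2:ℝ)) := by
    apply strictMonoOn_of_deriv_pos (convex_Ici _) cont.continuousOn
    intro x hx
    rw [interior_Ici] at hx
    rw [hderiv]
    exact dpos x (le_of_lt hx)
  have anti : StrictAntiOn f (Set.Iic (-1/2:ℝ)) := by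
    apply strictAntiOn_of_deriv_neg (convex_Iic _) cont.continuousOn
    intro x hx
    rw [interior_Iic] at hx
    rw [hderiv]
    exact dneg x (le_of_lt hx)
  -- negative root
  have fm : f (-1/2) < 0 := hneg _ (by rw [abs_of_nonpos (by norm_num : (-1/2:ℝ) ≤ 0)]; norm_num)
  obtain ⟨x₀, hx₀mem, hfx₀⟩ : ∃ x₀ ∈ Set.Icc (-2:ℝ) (-1/2), f x₀ = 0 := by
    have hsub := intermediate_value_Icc' (show (-2:ℝ) ≤ -1/2 by norm_num) cont.continuousOn
    have h0mem : (0:ℝ) ∈ Set.Icc (f (-1/2)) (f (-2)) := ⟨fm.le, f2pos.le⟩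
    obtain ⟨x₀, hmem, heq⟩ := hsub h0mem
    exact ⟨x₀, hmem, heq⟩
  have hx₀lt : x₀ ≤ -1/2 := hx₀mem.2
  have hx₀neg : x₀ < 0 := lt_of_le_of_lt hx₀lt (by norm_num)
  -- uniqueness of roots
  have uniq : ∀ x : ℝ, f x = 0 → x = x₀ ∨ x = 1 := by
    intro x hx
    rcases le_or_gt x (-1/2) with h|h
    · left
      exact anti.injOn (Set.mem_Iic.2 h) (Set.mem_Iic.2 hx₀lt) (hx.trans hfx₀.symm)
    rcases le_or_gt (1/2:ℝ) x with h2|h2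
    · right
      exact mono.injOn (Set.mem_Ici.2 h2) (Set.mem_Ici.2 (by norm_num)) (hx.trans h1.symm)
    · exfalso
      have : |x| ≤ 1/2 := abs_le.2 ⟨by linarith, h2.le⟩
      exact absurd hx (ne_of_lt (hneg x this))
  refine ⟨-x₀, ⟨one_pos, by linarith, ?_, h1, ?_, ?_, ?_⟩, ?_, ?_, ?_⟩
  · rw [neg_neg]; exact hfx₀
  · rw [neg_neg]; exact ne_of_lt (dneg x₀ hx₀lt)
  · exact (dpos 1 (by norm_num)).ne'
  · intro x hx
    rcases uniq x hx with h|h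
    · left; rw [neg_neg]; exact h
    · right; exact h
  · -- 0 < f(-1) → -x₀ < 1
    intro hpos
    have hm1 : (-1:ℝ) ∈ Set.Iic (-1/2:ℝ) := Set.mem_Iic.2 (by norm_num)
    have hne1 : x₀ ≠ -1 := by
      intro h
      rw [h] at hfx₀
      exact absurd hfx₀ (ne_of_gt hpos)
    by_contra hcon
    push_neg at hcon
    have hle : x₀ ≤ -1 := by linarith
    have hlt : x₀ < -1 := lt_of_le_of_ne hle hne1
    exact absurd (anti (Set.mem_Iic.2 hx₀lt) hm1 hlt) (by rw [hfx₀]; push_neg; linarith)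
  · -- f(-1) < 0 → 1 < -x₀
    intro hneg1
    have hm1 : (-1:ℝ) ∈ Set.Iic (-1/2:ℝ) := Set.mem_Iic.2 (by norm_num)
    by_contra hcon
    push_neg at hcon
    have hle : -1 ≤ x₀ := by linarith
    have hne1 : x₀ ≠ -1 := by
      intro h
      rw [h] at hfx₀
      exact absurd hfx₀ (ne_of_lt hneg1)
    have hlt : -1 < x₀ := lt_of_le_of_ne hle (Ne.symm hne1)
    exact absurd (anti hm1 (Set.mem_Iic.2 hx₀lt) hlt) (by rw [hfx₀]; linarith)
  · -- f(-1) = 0 → -x₀ = 1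
    intro h0
    rcases uniq (-1) h0 with h|h
    · rw [← h]; norm_num
    · norm_num at h

lemma build (d : ℕ) (hd : 0 < d) (hdeven : Even d)
    (ε : Fin d → ℝ) (hε : ∀ j, ε j = 1 ∨ ε j = -1)
    (hε0 : ε ⟨0, hd⟩ = -1)
    (j₁ j₂ : Fin d) (hne : j₁ ≠ j₂)
    (hodd1 : Odd (j₁ : ℕ)) (hodd2 : Odd (j₂ : ℕ))
    (hopp : ε j₁ = -ε j₂) (δ : ℝ)
    (hδ : |δ| ≤ (1 / (2 * (d:ℝ)^2 * 2^d)) / 3) :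
    ∃ a : Fin d → ℝ, (∀ j : Fin d, 0 < ε j * a j) ∧
      |a ⟨0, hd⟩ + 1| ≤ 1 / (2 * (d:ℝ)^2 * 2^d) ∧
      (∀ j : Fin d, (j : ℕ) ≠ 0 → |a j| ≤ 1 / (2 * (d:ℝ)^2 * 2^d)) ∧
      (Qpoly d a).eval 1 = 0 ∧
      (Qpoly d a).eval (-1) = 2 * ε j₁ * δ := by
  have hd1 : (1:ℝ) ≤ d := by exact_mod_cast hd
  set T : ℝ := 1 / (2 * (d:ℝ)^2 * 2^d) with hTdef
  have hTpos : 0 < T := by positivity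
  set t : ℝ := T / (3 * d) with htdef
  have htpos : 0 < t := by positivity
  have hdne : (d:ℝ) ≠ 0 := by positivity
  have htd : (d:ℝ) * t = T / 3 := by
    rw [htdef]; field_simp
  set z : Fin d := ⟨0, hd⟩ with hzdef
  have hz1 : z ≠ j₁ := by
    intro h
    rw [← h] at hodd1
    simp [hzdef] at hodd1
  have hz2 : z ≠ j₂ := by
    intro h
    rw [← h] at hodd2
    simp [hzdef] at hodd2
  have hεabs : ∀ j, |ε j| = 1 := by
    intro j; rcases hε j with h|h <;> rw [h] <;> norm_num
  have hεsq : ∀ j, ε j * ε j = 1 := by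
    intro j; rcases hε j with h|h <;> rw [h] <;> norm_num
  set A : ℝ := ∑ j : Fin d, ε j * t with hAdef
  set B : ℝ := ∑ j : Fin d, ε j * t * (-1:ℝ)^(j:ℕ) with hBdef
  have hA : |A| ≤ d * t := by
    calc |A| ≤ ∑ j : Fin d, |ε j * t| := Finset.abs_sum_le_sum_abs _ _
      _ = ∑ _j : Fin d, t := by
          apply Finset.sum_congr rfl; intro j _
          rw [abs_mul, hεabs, one_mul, abs_of_pos htpos]
      _ = d * t := by rw [Finset.sum_const, card_univ, Fintype.card_fin, nsmul_eq_mul]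
  have hB : |B| ≤ d * t := by
    calc |B| ≤ ∑ j : Fin d, |ε j * t * (-1:ℝ)^(j:ℕ)| := Finset.abs_sum_le_sum_abs _ _
      _ = ∑ _j : Fin d, t := by
          apply Finset.sum_congr rfl; intro j _
          rw [abs_mul, abs_mul, hεabs, one_mul, abs_of_pos htpos, abs_pow, abs_neg, abs_one,
            one_pow, mul_one]
      _ = d * t := by rw [Finset.sum_const, card_univ, Fintype.card_fin, nsmul_eq_mul]
  have hδt : |δ| ≤ d * t := by
    calc |δ| ≤ T / 3 := hδ
      _ = d * t := htd.symm
  set P : ℝ := (B - A) / 2 - ε j₁ * δ with hPdef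
  have hP : |P| ≤ 2 * (d * t) := by
    rw [hPdef]
    calc |(B - A)/2 - ε j₁ * δ| ≤ |(B - A)/2| + |ε j₁ * δ| := abs_sub _ _
      _ ≤ (|B| + |A|)/2 + |δ| := by
          rw [abs_mul, hεabs, one_mul]
          gcongr
          rw [abs_div, abs_two]
          gcongr
          exact abs_sub _ _
      _ ≤ 2 * (d * t) := by linarith
  set c₀ : ℝ := -1 - (A + B)/2 + ε j₁ * δ with hc₀def
  set c₁ : ℝ := P/2 + ε j₁ * t * d with hc₁def
  set c₂ : ℝ := P/2 - ε j₁ * t * d with hc₂def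
  set a : Fin d → ℝ := fun j => ε j * t + (if j = z then c₀ else 0)
      + (if j = j₁ then c₁ else 0) + (if j = j₂ then c₂ else 0) with hadef
  clear_value T t A B P c₀ c₁ c₂ a
  have haz : a z = -t + c₀ := by
    rw [hadef]
    simp [hz1, hz2, hε0]
  have haj₁ : a j₁ = ε j₁ * t + c₁ := by
    rw [hadef]
    simp [(Ne.symm hz1 : j₁ ≠ z), hne]
  have haj₂ : a j₂ = ε j₂ * t + c₂ := by
    rw [hadef]
    simp [(Ne.symm hz2 : j₂ ≠ z), (Ne.symm hne : j₂ ≠ j₁)]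
  have hagen : ∀ j : Fin d, j ≠ z → j ≠ j₁ → j ≠ j₂ → a j = ε j * t := by
    intro j h0 h1 h2
    rw [hadef]
    simp [h0, h1, h2]
  -- evaluation formula
  have heval : ∀ x : ℝ, (Qpoly d a).eval x
      = x ^ d + (∑ j : Fin d, ε j * t * x ^ (j:ℕ)) + c₀ * x ^ (z:ℕ)
        + c₁ * x ^ (j₁:ℕ) + c₂ * x ^ (j₂:ℕ) := by
    intro x
    rw [eval_Qpoly, hadef]
    simp only [add_mul]
    rw [Finset.sum_add_distrib, Finset.sum_add_distrib, Finset.sum_add_distrib,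
      sum_ite_pow, sum_ite_pow, sum_ite_pow]
    ring
  have heval1 : (Qpoly d a).eval 1 = 0 := by
    rw [heval]
    have hA1 : ∑ j : Fin d, ε j * t * (1:ℝ) ^ (j:ℕ) = A := by
      rw [hAdef]; apply Finset.sum_congr rfl; intro j _; rw [one_pow, mul_one]
    rw [hA1, hc₀def, hc₁def, hc₂def, hPdef]
    simp only [one_pow, mul_one]
    ring
  have hevalm1 : (Qpoly d a).eval (-1) = 2 * ε j₁ * δ := by
    rw [heval]
    have hB1 : ∑ j : Fin d, ε j * t * (-1:ℝ) ^ (j:ℕ) = B := hBdef.symm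
    have hdpow : (-1:ℝ) ^ d = 1 := hdeven.neg_one_pow
    have hzpow : (-1:ℝ) ^ (z:ℕ) = 1 := by norm_num [hzdef]
    have h1pow : (-1:ℝ) ^ (j₁:ℕ) = -1 := hodd1.neg_one_pow
    have h2pow : (-1:ℝ) ^ (j₂:ℕ) = -1 := hodd2.neg_one_pow
    rw [hB1, hdpow, hzpow, h1pow, h2pow, hc₀def, hc₁def, hc₂def, hPdef]
    ring
  have h3dt : 3 * ((d:ℝ) * t) = T := by rw [htd]; ring
  have htled : t ≤ (d:ℝ) * t := le_mul_of_one_le_left htpos.le hd1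
  have hPb := abs_le.1 hP
  have hAb := abs_le.1 hA
  have hBb := abs_le.1 hB
  have hδb := abs_le.1 hδt
  have hedabs : |ε j₁ * δ| = |δ| := by rw [abs_mul, hεabs, one_mul]
  have hedb : -((d:ℝ)*t) ≤ ε j₁ * δ ∧ ε j₁ * δ ≤ (d:ℝ)*t :=
    abs_le.1 (le_trans hedabs.le hδt)
  have hT1 : T ≤ 1 := by
    rw [hTdef, div_le_one (by positivity)]
    nlinarith [hd1, (show (1:ℝ) ≤ 2 ^ d from one_le_pow₀ one_le_two), sq_nonneg ((d:ℝ) - 1)]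
  -- bound for a z + 1
  have hbound0 : |a ⟨0, hd⟩ + 1| ≤ T := by
    rw [← hzdef, haz, hc₀def]
    have : -t + (-1 - (A + B)/2 + ε j₁ * δ) + 1 = -t - (A+B)/2 + ε j₁ * δ := by ring
    rw [this]
    rw [abs_le]
    constructor <;> linarith [hedb.1, hedb.2, hAb.1, hAb.2, hBb.1, hBb.2, htpos, htled, h3dt]
  -- bounds for other coefficients
  have hboundj : ∀ j : Fin d, (j:ℕ) ≠ 0 → |a j| ≤ T := by
    intro j hj
    by_cases h1' : j = j₁
    · subst h1'
      rw [haj₁, hc₁def]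
      have habs1 : |ε j * t| = t := by rw [abs_mul, hεabs, one_mul, abs_of_pos htpos]
      have habs2 : |ε j * t * d| = t * d := by
        rw [abs_mul, abs_mul, hεabs, one_mul, abs_of_pos htpos, Nat.abs_cast]
      calc |ε j * t + (P/2 + ε j * t * d)| ≤ |ε j * t| + (|P|/2 + |ε j * t * d|) := by
            refine le_trans (abs_add_le _ _) ?_
            gcongr
            refine le_trans (abs_add_le _ _) ?_
            gcongr
            rw [abs_div, abs_two]
        _ = t + (|P|/2 + t * d) := by rw [habs1, habs2]
        _ ≤ T := by linarith [hPb.2, htled, h3dt, htpos]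
    by_cases h2' : j = j₂
    · subst h2'
      rw [haj₂, hc₂def]
      have habs1 : |ε j * t| = t := by rw [abs_mul, hεabs, one_mul, abs_of_pos htpos]
      have habs2 : |ε j₁ * t * d| = t * d := by
        rw [abs_mul, abs_mul, hεabs, one_mul, abs_of_pos htpos, Nat.abs_cast]
      calc |ε j * t + (P/2 - ε j₁ * t * d)| ≤ |ε j * t| + (|P|/2 + |ε j₁ * t * d|) := by
            refine le_trans (abs_add_le _ _) ?_
            gcongr
            refine le_trans (abs_sub _ _) ?_
            gcongr
            rw [abs_div, abs_two]
        _ = t + (|P|/2 + t * d) := by rw [habs1, habs2]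
        _ ≤ T := by linarith [hPb.2, htled, h3dt, htpos]
    · have hjz : j ≠ z := by
        intro h
        apply hj
        rw [h, hzdef]
      rw [hagen j hjz h1' h2']
      rw [abs_mul, hεabs, one_mul, abs_of_pos htpos]
      linarith [htled, h3dt, htpos]
  -- signs
  have hsigns : ∀ j : Fin d, 0 < ε j * a j := by
    intro j
    by_cases h0' : j = z
    · subst h0'
      rw [haz, hε0, hc₀def]
      linarith [hedb.1, hedb.2, hAb.1, hAb.2, hBb.1, hBb.2, htpos, h3dt, hT1]
    by_cases h1' : j = j₁
    · subst h1'
      rw [haj₁, hc₁def]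
      rcases hε j with h|h <;> rw [h] <;> linarith [hPb.1, hPb.2, htpos, htled]
    by_cases h2' : j = j₂
    · subst h2'
      rw [haj₂, hc₂def, hopp]
      rcases hε j with h|h <;> rw [h] <;> linarith [hPb.1, hPb.2, htpos, htled]
    · rw [hagen j h0' h1' h2', ← mul_assoc, hεsq j, one_mul]
      exact htpos
  exact ⟨a, hsigns, hbound0, hboundj, heval1, hevalm1⟩


theorem stmt10 (d : ℕ) (hd : 0 < d) (hdeven : Even d)
    (ε : Fin d → ℝ) (hε : ∀ j, ε j = 1 ∨ ε j = -1)
    (hε0 : ε ⟨0, hd⟩ = -1)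
    (j₁ j₂ : Fin d) (hne : j₁ ≠ j₂)
    (hodd1 : Odd (j₁ : ℕ)) (hodd2 : Odd (j₂ : ℕ))
    (hopp : ε j₁ = -ε j₂) :
    (∃ (a : Fin d → ℝ) (ξ η : ℝ), (∀ j : Fin d, 0 < ε j * a j) ∧
        TwoSimpleRootsPM d a ξ η ∧ η < ξ) ∧
    (∃ (a : Fin d → ℝ) (ξ η : ℝ), (∀ j : Fin d, 0 < ε j * a j) ∧
        TwoSimpleRootsPM d a ξ η ∧ ξ < η) ∧
    (∃ (a : Fin d → ℝ) (ξ η : ℝ), (∀ j : Fin d, 0 < ε j * a j) ∧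
        TwoSimpleRootsPM d a ξ η ∧ ξ = η) := by
  have hεsq : ∀ j, ε j * ε j = 1 := by
    intro j; rcases hε j with h|h <;> rw [h] <;> norm_num
  have hεabs : ∀ j, |ε j| = 1 := by
    intro j; rcases hε j with h|h <;> rw [h] <;> norm_num
  set T : ℝ := 1 / (2 * (d:ℝ)^2 * 2^d) with hTdef
  have hTpos : 0 < T := by positivity
  refine ⟨?_, ?_, ?_⟩
  · -- η < ξ : take δ = ε j₁ * (T/3), so eval(-1) = 2T/3 > 0, η < 1
    obtain ⟨a, hsigns, hb0, hbj, he1, hem1⟩ :=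
      build d hd hdeven ε hε hε0 j₁ j₂ hne hodd1 hodd2 hopp (ε j₁ * (T/3))
        (by rw [abs_mul, hεabs, one_mul, abs_of_pos (by positivity)])
    obtain ⟨η, htsr, hlt, _, _⟩ := aux_roots d hd hdeven a hb0 hbj he1
    refine ⟨a, 1, η, hsigns, htsr, ?_⟩
    apply hlt
    rw [hem1, mul_assoc, ← mul_assoc (ε j₁), hεsq j₁, one_mul]
    positivity
  · -- ξ < η : take δ = ε j₁ * (-(T/3))
    obtain ⟨a, hsigns, hb0, hbj, he1, hem1⟩ :=
      build d hd hdeven ε hε hε0 j₁ j₂ hne hodd1 hodd2 hopp (ε j₁ * (-(T/3)))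
        (by rw [abs_mul, hεabs, one_mul, abs_neg, abs_of_pos (by positivity)])
    obtain ⟨η, htsr, _, hgt, _⟩ := aux_roots d hd hdeven a hb0 hbj he1
    refine ⟨a, 1, η, hsigns, htsr, ?_⟩
    apply hgt
    rw [hem1, mul_assoc, ← mul_assoc (ε j₁), hεsq j₁, one_mul]
    have : 0 < 2 * (T/3) := by positivity
    linarith
  · -- ξ = η : take δ = 0
    obtain ⟨a, hsigns, hb0, hbj, he1, hem1⟩ :=
      build d hd hdeven ε hε hε0 j₁ j₂ hne hodd1 hodd2 hopp 0
        (by rw [abs_zero]; positivity)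
    obtain ⟨η, htsr, _, _, heq⟩ := aux_roots d hd hdeven a hb0 hbj he1
    have hη1 : η = 1 := heq (by rw [hem1, mul_zero])
    refine ⟨a, 1, η, hsigns, htsr, hη1.symm⟩
end

section
/- Let d be an even positive integer, let ε : {0,…,d−1} → {−1,1} be a sign pattern, and let r₁ < r₂ be two fixed real numbers. Then the set of coefficient vectors (a_0,…,a_{d−1}) ∈ ℝ^d such that the monic polynomial Q = x^d + a_{d−1}x^{d−1} + ⋯ + a_0 has sign pattern ε and has exactly two real roots, both simple, equal to r₁ and r₂, is convex. -/
/-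
A polynomial `P` with positive leading coefficient whose real zeros are exactly the points of a
finite set `S`, all simple, factors as `(∏ r ∈ S, (X - r)) * q` with `q > 0` on all of `ℝ`:
the product divides `P`, and `q` can have no real zero (it would be a double root of `P`) and has
positive leading coefficient. Conversely every such product has these properties. A convex
combination of two such products is the same product times a convex combination of the positive
cofactors, so these polynomials form a convex set. The coefficient map `a ↦ Q` is affine and the
sign pattern cuts out an open orthant, so the set of coefficient vectors is convex.
-/

open Polynomial

namespace Polynomial

def HasExactSimpleRoots (P : ℝ[X]) (S : Finset ℝ) : Prop :=
  (∀ r ∈ S, P.eval r = 0 ∧ (derivative P).eval r ≠ 0) ∧ ∀ x, P.eval x = 0 → x ∈ S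

theorem hasExactSimpleRoots_pair_iff {P : ℝ[X]} {r₁ r₂ : ℝ} :
    HasExactSimpleRoots P {r₁, r₂} ↔
      P.eval r₁ = 0 ∧ P.eval r₂ = 0 ∧ (derivative P).eval r₁ ≠ 0 ∧
        (derivative P).eval r₂ ≠ 0 ∧ ∀ x, P.eval x = 0 → x = r₁ ∨ x = r₂ := by
  simp only [HasExactSimpleRoots, Finset.mem_insert, Finset.mem_singleton, forall_eq_or_imp,
    forall_eq]
  tauto

theorem eval_prod_X_sub_C_eq_zero_iff (S : Finset ℝ) (x : ℝ) :
    (∏ r ∈ S, (X - C r)).eval x = 0 ↔ x ∈ S := by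
  simp [eval_prod, Finset.prod_eq_zero_iff, sub_eq_zero]

theorem eval_derivative_prod_X_sub_C_ne_zero {S : Finset ℝ} {r : ℝ} (hr : r ∈ S) :
    (derivative (∏ s ∈ S, (X - C s))).eval r ≠ 0 := by
  rw [← Finset.mul_prod_erase S _ hr, derivative_mul]
  simpa using eval_prod_X_sub_C_eq_zero_iff (S.erase r) r |>.not.2 (by simp)

theorem leadingCoeff_prod_X_sub_C_mul (S : Finset ℝ) (q : ℝ[X]) :
    ((∏ r ∈ S, (X - C r)) * q).leadingCoeff = q.leadingCoeff := by
  rw [leadingCoeff_mul, (monic_prod_of_monic S _ fun r _ => monic_X_sub_C r).leadingCoeff,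
    one_mul]

theorem leadingCoeff_pos_of_forall_eval_pos {q : ℝ[X]} (hq : ∀ x, 0 < q.eval x) :
    0 < q.leadingCoeff := by
  by_contra! hlc
  exact (eval_lt_zero_of_roots_lt_of_leadingCoeff_nonpos (x := 0)
    (fun y hy => absurd hy (hq y).ne') hlc).not_gt (hq 0)

theorem hasExactSimpleRoots_prod_X_sub_C_mul (S : Finset ℝ) {q : ℝ[X]}
    (hq : ∀ x, 0 < q.eval x) : HasExactSimpleRoots ((∏ r ∈ S, (X - C r)) * q) S := by
  refine ⟨fun r hr => ⟨?_, ?_⟩, fun x hx => ?_⟩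
  · rw [eval_mul, (eval_prod_X_sub_C_eq_zero_iff S r).2 hr, zero_mul]
  · rw [derivative_mul, eval_add, eval_mul, eval_mul, (eval_prod_X_sub_C_eq_zero_iff S r).2 hr,
      zero_mul, add_zero]
    exact mul_ne_zero (eval_derivative_prod_X_sub_C_ne_zero hr) (hq r).ne'
  · rw [eval_mul] at hx
    exact (eval_prod_X_sub_C_eq_zero_iff S x).1
      ((mul_eq_zero.1 hx).resolve_right (hq x).ne')

theorem HasExactSimpleRoots.exists_eq_prod_X_sub_C_mul {P : ℝ[X]} {S : Finset ℝ}
    (hP : HasExactSimpleRoots P S) (hlc : 0 < P.leadingCoeff) :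
    ∃ q : ℝ[X], (∀ x, 0 < q.eval x) ∧ P = (∏ r ∈ S, (X - C r)) * q := by
  obtain ⟨q, rfl⟩ : (∏ r ∈ S, (X - C r)) ∣ P :=
    Finset.prod_dvd_of_coprime ((pairwise_coprime_X_sub_C Function.injective_id).set_pairwise _)
      fun r hr => dvd_iff_isRoot.2 (hP.1 r hr).1
  rw [leadingCoeff_prod_X_sub_C_mul] at hlc
  have hq : ∀ y, ¬ q.IsRoot y := by
    intro y hy
    have hyS : y ∈ S := hP.2 y (by rw [eval_mul, hy.eq_zero, mul_zero])
    have hPy := (hP.1 y hyS).2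
    rw [derivative_mul, eval_add, eval_mul, eval_mul, hy.eq_zero,
      (eval_prod_X_sub_C_eq_zero_iff S y).2 hyS, mul_zero, zero_mul, add_zero] at hPy
    exact hPy rfl
  exact ⟨q, fun x => zero_lt_eval_of_roots_lt_of_leadingCoeff_nonneg
    (fun y hy => (hq y hy).elim) hlc.le, rfl⟩

theorem leadingCoeff_pos_and_hasExactSimpleRoots_iff {P : ℝ[X]} {S : Finset ℝ} :
    0 < P.leadingCoeff ∧ HasExactSimpleRoots P S ↔
      ∃ q : ℝ[X], (∀ x, 0 < q.eval x) ∧ P = (∏ r ∈ S, (X - C r)) * q := by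
  refine ⟨fun ⟨hlc, hP⟩ => hP.exists_eq_prod_X_sub_C_mul hlc, ?_⟩
  rintro ⟨q, hq, rfl⟩
  exact ⟨(leadingCoeff_prod_X_sub_C_mul S q).symm ▸ leadingCoeff_pos_of_forall_eval_pos hq,
    hasExactSimpleRoots_prod_X_sub_C_mul S hq⟩

theorem convex_setOf_hasExactSimpleRoots (S : Finset ℝ) :
    Convex ℝ {P : ℝ[X] | 0 < P.leadingCoeff ∧ HasExactSimpleRoots P S} := by
  simp only [leadingCoeff_pos_and_hasExactSimpleRoots_iff]
  rintro _ ⟨p, hp, rfl⟩ _ ⟨q, hq, rfl⟩ t s ht hs hts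
  refine ⟨t • p + s • q, fun x => ?_, by rw [mul_add, mul_smul_comm, mul_smul_comm]⟩
  simpa using convex_Ioi (0 : ℝ) (hp x) (hq x) ht hs hts

end Polynomial

theorem convex_setOf_forall_pos_mul {ι : Type*} (ε : ι → ℝ) :
    Convex ℝ {a : ι → ℝ | ∀ j, 0 < ε j * a j} := by
  intro a ha b hb t s ht hs hts j
  have := convex_Ioi (0 : ℝ) (ha j) (hb j) ht hs hts
  simp only [smul_eq_mul, Set.mem_Ioi] at this
  simp only [Pi.add_apply, Pi.smul_apply, smul_eq_mul]
  linarith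

theorem Qpoly_monic (d : ℕ) (a : Fin d → ℝ) : (Qpoly d a).Monic :=
  monic_X_pow_add (degree_sum_fin_lt a)

theorem Qpoly_add_smul {d : ℕ} (a b : Fin d → ℝ) {t s : ℝ} (hts : t + s = 1) :
    Qpoly d (t • a + s • b) = t • Qpoly d a + s • Qpoly d b := by
  have hC : (C t : ℝ[X]) + C s = 1 := by rw [← C_add, hts, C_1]
  simp only [Qpoly, smul_eq_C_mul, Pi.add_apply, Pi.smul_apply, smul_eq_mul, C_add, C_mul,
    mul_add, add_mul, Finset.mul_sum, Finset.sum_add_distrib, mul_assoc]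
  linear_combination (-(X ^ d) : ℝ[X]) * hC

theorem Convex.Qpoly_preimage {s : Set ℝ[X]} (hs : Convex ℝ s) (d : ℕ) :
    Convex ℝ (Qpoly d ⁻¹' s) := by
  intro a ha b hb t u ht hu htu
  simpa only [Set.mem_preimage, Qpoly_add_smul a b htu] using hs ha hb ht hu htu

theorem stmt17_general (d : ℕ)
    (ε : Fin d → ℝ)
    (r₁ r₂ : ℝ) :
    Convex ℝ {a : Fin d → ℝ | (∀ j : Fin d, 0 < ε j * a j) ∧
      (Qpoly d a).eval r₁ = 0 ∧ (Qpoly d a).eval r₂ = 0 ∧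
      (Polynomial.derivative (Qpoly d a)).eval r₁ ≠ 0 ∧
      (Polynomial.derivative (Qpoly d a)).eval r₂ ≠ 0 ∧
      ∀ x : ℝ, (Qpoly d a).eval x = 0 → x = r₁ ∨ x = r₂} := by
  convert (convex_setOf_forall_pos_mul ε).inter
    ((convex_setOf_hasExactSimpleRoots {r₁, r₂}).Qpoly_preimage d) using 1
  ext a
  simp [hasExactSimpleRoots_pair_iff, (Qpoly_monic d a).leadingCoeff]

theorem stmt17 (d : ℕ) (hd : 0 < d) (hdeven : Even d)
    (ε : Fin d → ℝ) (hε : ∀ j, ε j = 1 ∨ ε j = -1)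
    (r₁ r₂ : ℝ) (hr : r₁ < r₂) :
    Convex ℝ {a : Fin d → ℝ | (∀ j : Fin d, 0 < ε j * a j) ∧
      (Qpoly d a).eval r₁ = 0 ∧ (Qpoly d a).eval r₂ = 0 ∧
      (Polynomial.derivative (Qpoly d a)).eval r₁ ≠ 0 ∧
      (Polynomial.derivative (Qpoly d a)).eval r₂ ≠ 0 ∧
      ∀ x : ℝ, (Qpoly d a).eval x = 0 → x = r₁ ∨ x = r₂} :=
  stmt17_general d ε r₁ r₂
end
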